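/- For g = sl_N and i = 1,…,N−1, the operator 𝔹_{w_{[i]},V}(λ) (corresponding to the minuscule coweight ω_i^∨) is the product, in a suitable order, of all operators B^α_V(λ) with α ∈ Σ_+ and (ω_i^∨, α) > 0. Equivalently, the set of positive roots reflected to negative roots by w_{[i]} is {α ∈ Σ_+ | (ω_i^∨, α) = 1}. -/

import Mathlib

/- STATEMENT 15: for g = sl_N and i = 1,…,N−1, the operator 𝔹_{w_{[i]},V}(λ) is the
product, in a suitable order, of all operators B^α_V(λ) with α ∈ Σ₊ and (ω_i^∨,α) > 0;
equivalently, the set of positive roots sent to negative roots by w_{[i]} is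
{α ∈ Σ₊ | (ω_i^∨, α) = 1}.

We write N = M+1.  Roots of sl_N are pairs (a,b), a ≠ b (the root e_aa − e_bb),
positive iff a < b; (ω_i^∨, e_aa − e_bb) = 1 iff a < i ≤ b (0-indexed), and
w_{[i]} ∈ S_N is k ↦ k − i (mod N).  The Lie algebra is recorded by its gl-generators
`Egl a b` with the standard commutation relations, acting on the finite-dimensional
module VV through `act`.  For the root α = (a,b): H_α = e_aa − e_bb, E_α = e_ab,
F_α = e_ba, and on the weight space VV[ν],
`B^α(λ) = p((λ+ν/2,α^∨)−1; H_α,E_α,F_α)`.  The operator 𝔹_{w,V}(λ) is the ordered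
product of the B^{α^j}(λ) over the root sequence α^j of a reduced presentation of w
(Lemma B=BBB / property II of Section 2.7 of the paper). -/

open scoped BigOperators

attribute [local instance 100] LieRing.ofAssociativeRing

noncomputable section

variable {VV : Type*} [AddCommGroup VV] [Module ℂ VV]

/-- `p(t; H, E, F)`, truncated at `k = finrank` (exact on finite-dimensional modules). -/
def pEnd [FiniteDimensional ℂ VV] (t : ℂ) (H E F : Module.End ℂ VV) : Module.End ℂ VV :=
  ∑ k ∈ Finset.range (Module.finrank ℂ VV + 1),
    ((Nat.factorial k : ℂ))⁻¹ •
      (F ^ k * E ^ k *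
        ((List.range k).map fun j =>
          Ring.inverse (t • (1 : Module.End ℂ VV) - H - (j : ℂ) • 1)).prod)

variable {g : Type*} [LieRing g] [LieAlgebra ℂ g] {M : ℕ}

/-- The simple transposition s_j = (j, j+1) ∈ S_N, N = M+1. -/
def tau (j : Fin M) : Equiv.Perm (Fin (M+1)) := Equiv.swap j.castSucc j.succ

/-- The product s_{i_k} ⋯ s_{i_1} for the word l = [i_1, …, i_k]. -/
def wordPerm (l : List (Fin M)) : Equiv.Perm (Fin (M+1)) := ((l.map tau).reverse).prod

/-- The root sequence α^1 = α_{i_1}, α^j = s_{i_1}⋯s_{i_{j−1}}(α_{i_j}) of a word,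
at the level of pairs (a,b) ↔ the root e_aa − e_bb. -/
def rootPairs : List (Fin M) → List (Fin (M+1) × Fin (M+1))
  | [] => []
  | j :: t => (j.castSucc, j.succ) :: (rootPairs t).map fun p => (tau j p.1, tau j p.2)

/-- The argument `(λ+ν/2, α^∨) − 1` for the root α = e_aa − e_bb. -/
def tval (lam nu : Fin (M+1) → ℝ) (a b : Fin (M+1)) : ℂ :=
  (((lam a - lam b) + (nu a - nu b) / 2 : ℝ) : ℂ) - 1

/-- The operator `B^α_V(λ)` on the weight space VV[ν], α = (a,b). -/
def Bop [FiniteDimensional ℂ VV] (act : g →ₗ⁅ℂ⁆ Module.End ℂ VV)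
    (Egl : Fin (M+1) → Fin (M+1) → g) (lam nu : Fin (M+1) → ℝ) (a b : Fin (M+1)) :
    Module.End ℂ VV :=
  pEnd (tval lam nu a b) (act (Egl a a - Egl b b)) (act (Egl a b)) (act (Egl b a))

/-- The operator `𝔹_{w,V}(λ)` on VV[ν]: the ordered product
`B^{α^k}(λ) ⋯ B^{α^1}(λ)` over the root sequence of a reduced word for w. -/
def BBop [FiniteDimensional ℂ VV] (act : g →ₗ⁅ℂ⁆ Module.End ℂ VV)
    (Egl : Fin (M+1) → Fin (M+1) → g) (lam nu : Fin (M+1) → ℝ) (l : List (Fin M)) :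
    Module.End ℂ VV :=
  (((rootPairs l).map fun p => Bop act Egl lam nu p.1 p.2).reverse).prod

/- The root sequence of any word covers the inversion set of the permutation it spells: right
multiplication by a simple transposition s_j adds at most the simple root (j, j+1) to the
inversion set and otherwise moves inversions by s_j. Conversely, peeling off descents writes
every permutation as a word whose length is its number of inversions. Hence the root sequence
of a reduced word has no repetitions and is exactly the inversion set, and the inversions of
w_{[i]} : k ↦ k − i are the pairs a < i ≤ b. -/

open Finset

namespace Equiv.Perm

lemma eq_one_of_strictMono {α : Type*} [LinearOrder α] [WellFoundedLT α] {w : Perm α}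
    (hw : StrictMono w) : w = 1 :=
  Equiv.ext fun x =>
    congrArg (· x) (Subsingleton.elim (hw.orderIsoOfSurjective w w.surjective) (OrderIso.refl α))

variable {α : Type*} [Fintype α] [LinearOrder α]

def inversions (w : Perm α) : Finset (α × α) :=
  univ.filter fun p => p.1 < p.2 ∧ w p.2 < w p.1

@[simp]
lemma mem_inversions {w : Perm α} {p : α × α} :
    p ∈ w.inversions ↔ p.1 < p.2 ∧ w p.2 < w p.1 := by
  simp [inversions]

@[simp]
lemma inversions_one : (1 : Perm α).inversions = ∅ := by
  ext p
  simpa using le_of_lt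

end Equiv.Perm

open Equiv.Perm

lemma tau_val (j : Fin M) (x : Fin (M+1)) :
    (tau j x : ℕ) =
      if (x : ℕ) = j then (j : ℕ) + 1 else if (x : ℕ) = (j : ℕ) + 1 then (j : ℕ) else x := by
  rw [tau, Equiv.swap_apply_def]
  split_ifs <;> simp_all [Fin.ext_iff]

lemma tau_tau (j : Fin M) (x : Fin (M+1)) : tau j (tau j x) = x :=
  Equiv.swap_apply_self _ _ _

lemma tau_mul_tau (j : Fin M) : tau j * tau j = 1 :=
  Equiv.swap_mul_self _ _

lemma tau_lt_tau (j : Fin M) {a b : Fin (M+1)} (hab : a < b)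
    (hne : (a, b) ≠ (j.castSucc, j.succ)) : tau j a < tau j b := by
  have hne' : ¬((a : ℕ) = j ∧ (b : ℕ) = j + 1) := fun ⟨ha, hb⟩ =>
    hne (Prod.ext (Fin.ext ha) (Fin.ext hb))
  rw [Fin.lt_def] at hab ⊢
  rw [tau_val, tau_val]
  split_ifs <;> omega

lemma inversions_mul_tau_subset (u : Equiv.Perm (Fin (M+1))) (j : Fin M) :
    (u * tau j).inversions ⊆
      insert (j.castSucc, j.succ) (u.inversions.image (Prod.map (tau j) (tau j))) := by
  rintro ⟨a, b⟩ hab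
  rw [mem_inversions] at hab
  by_cases hs : (a, b) = (j.castSucc, j.succ)
  · exact hs ▸ mem_insert_self _ _
  · refine mem_insert_of_mem (mem_image.2 ⟨(tau j a, tau j b), ?_, by simp [tau_tau]⟩)
    exact mem_inversions.2 ⟨tau_lt_tau j hab.1 hs, hab.2⟩

lemma card_inversions_mul_tau_lt {w : Equiv.Perm (Fin (M+1))} {j : Fin M}
    (hj : w j.succ < w j.castSucc) : #(w * tau j).inversions < #w.inversions := by
  have hsimple : (j.castSucc, j.succ) ∉ (w * tau j).inversions := fun h =>
    hj.not_gt (by simpa [tau] using (mem_inversions.1 h).2)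
  have hsub := (subset_insert_iff_of_notMem hsimple).1 (inversions_mul_tau_subset w j)
  have hssub : (w * tau j).inversions ⊂ w.inversions.image (Prod.map (tau j) (tau j)) := by
    refine (ssubset_iff_of_subset hsub).2 ⟨(j.succ, j.castSucc), mem_image.2
      ⟨(j.castSucc, j.succ), mem_inversions.2 ⟨Fin.castSucc_lt_succ, hj⟩, by simp [tau]⟩, ?_⟩
    exact fun h => (mem_inversions.1 h).1.not_gt Fin.castSucc_lt_succ
  exact (card_lt_card hssub).trans_le card_image_le

lemma exists_descent_of_ne_one {w : Equiv.Perm (Fin (M+1))} (hw : w ≠ 1) :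
    ∃ j : Fin M, w j.succ < w j.castSucc := by
  by_contra! h
  exact hw (eq_one_of_strictMono (Fin.strictMono_iff_lt_succ.2 fun j =>
    (h j).lt_of_ne (w.injective.ne Fin.castSucc_lt_succ.ne)))

lemma wordPerm_cons (j : Fin M) (t : List (Fin M)) :
    wordPerm (j :: t) = wordPerm t * tau j := by
  simp [wordPerm]

theorem exists_wordPerm_eq_of_length_le (w : Equiv.Perm (Fin (M+1))) :
    ∃ l : List (Fin M), wordPerm l = w ∧ l.length ≤ #w.inversions := by
  by_cases hw : w = 1
  · exact ⟨[], hw.symm ▸ rfl, Nat.zero_le _⟩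
  obtain ⟨j, hj⟩ := exists_descent_of_ne_one hw
  have hdecreasing := card_inversions_mul_tau_lt hj
  obtain ⟨t, ht, hlen⟩ := exists_wordPerm_eq_of_length_le (w * tau j)
  refine ⟨j :: t, by rw [wordPerm_cons, ht, mul_assoc, tau_mul_tau, mul_one], ?_⟩
  rw [List.length_cons]
  omega
termination_by #w.inversions

lemma length_rootPairs (l : List (Fin M)) : (rootPairs l).length = l.length := by
  induction l with
  | nil => rfl
  | cons j t ih => simp [rootPairs, ih]

lemma inversions_wordPerm_subset (l : List (Fin M)) :
    (wordPerm l).inversions ⊆ (rootPairs l).toFinset := by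
  induction l with
  | nil =>
    simp only [wordPerm, List.map_nil, List.reverse_nil, List.prod_nil, inversions_one,
      empty_subset]
  | cons j t ih =>
    rw [wordPerm_cons]
    refine (inversions_mul_tau_subset _ j).trans ?_
    rw [rootPairs, List.toFinset_cons]
    refine insert_subset_insert _ ((image_subset_image ih).trans_eq ?_)
    ext p
    simp

theorem rootPairs_nodup_and_toFinset_eq_of_reduced {l : List (Fin M)}
    (hred : ∀ l' : List (Fin M), wordPerm l' = wordPerm l → l.length ≤ l'.length) :
    (rootPairs l).Nodup ∧ (rootPairs l).toFinset = (wordPerm l).inversions := by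
  obtain ⟨l₀, hl₀, hlen₀⟩ := exists_wordPerm_eq_of_length_le (wordPerm l)
  have hsub := inversions_wordPerm_subset l
  have hlen : (rootPairs l).length ≤ #(wordPerm l).inversions :=
    length_rootPairs l ▸ (hred l₀ hl₀).trans hlen₀
  refine ⟨Multiset.coe_nodup.1 (Multiset.toFinset_card_eq_card_iff_nodup.1 ?_), ?_⟩
  · exact le_antisymm (List.toFinset_card_le _) (hlen.trans (card_le_card hsub))
  · exact (eq_of_subset_of_card_le hsub ((List.toFinset_card_le _).trans hlen)).symm

lemma subRight_lt_subRight_iff {n : ℕ} [NeZero n] {i a b : Fin n} (hab : a < b) :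
    Equiv.subRight i b < Equiv.subRight i a ↔ a < i ∧ i ≤ b := by
  have hval : ∀ x : Fin n,
      ((x - i : Fin n) : ℕ) = if i ≤ x then (x : ℕ) - i else n + (x : ℕ) - i := by
    intro x
    split_ifs with h
    · exact Fin.coe_sub_iff_le.2 h
    · exact Fin.coe_sub_iff_lt.2 (not_le.1 h)
  have := a.isLt
  have := b.isLt
  simp only [Equiv.subRight_apply, Fin.lt_def, Fin.le_def, hval] at hab ⊢
  split_ifs <;> omega

theorem stmt15_general [FiniteDimensional ℂ VV]
    (act : g →ₗ⁅ℂ⁆ Module.End ℂ VV) (Egl : Fin (M+1) → Fin (M+1) → g)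
    -- i ∈ {1, …, N−1}, and a reduced presentation l of w_{[i]} : k ↦ k − i mod N
    (i : Fin (M+1))
    (l : List (Fin M)) (hl : wordPerm l = Equiv.subRight i)
    (hred : ∀ l' : List (Fin M), wordPerm l' = Equiv.subRight i → l.length ≤ l'.length)
    -- λ, and a weight vector v of weight ν
    (lam nu : Fin (M+1) → ℝ) :
    -- (1) 𝔹_{w_{[i]},V}(λ) is the product, in a suitable order, of all B^α_V(λ) with
    -- α ∈ Σ₊, (ω_i^∨, α) > 0, i.e. α = (a,b) with a < i ≤ b
    (∃ L : List (Fin (M+1) × Fin (M+1)), L.Nodup ∧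
      (∀ p : Fin (M+1) × Fin (M+1),
        p ∈ L ↔ (p.1 < p.2 ∧ (p.1 : ℕ) < (i : ℕ) ∧ (i : ℕ) ≤ (p.2 : ℕ))) ∧
      BBop act Egl lam nu l = ((L.map fun p => Bop act Egl lam nu p.1 p.2).prod)) ∧
    -- (2) the positive roots made negative by w_{[i]} are exactly those with
    -- (ω_i^∨, α) = 1
    (∀ a b : Fin (M+1), a < b →
      (Equiv.subRight i b < Equiv.subRight i a ↔ ((a : ℕ) < (i : ℕ) ∧ (i : ℕ) ≤ (b : ℕ)))) := by
  have hinv : ∀ a b : Fin (M+1), a < b →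
      (Equiv.subRight i b < Equiv.subRight i a ↔ ((a : ℕ) < (i : ℕ) ∧ (i : ℕ) ≤ (b : ℕ))) :=
    fun a b hab => by simpa only [Fin.val_fin_lt, Fin.val_fin_le] using subRight_lt_subRight_iff hab
  obtain ⟨hnodup, hroots⟩ := rootPairs_nodup_and_toFinset_eq_of_reduced (l := l) (hl ▸ hred)
  refine ⟨⟨(rootPairs l).reverse, List.nodup_reverse.2 hnodup, fun p => ?_,
    by rw [BBop, List.map_reverse]⟩, hinv⟩
  rw [List.mem_reverse, ← List.mem_toFinset, hroots, hl, mem_inversions]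
  exact and_congr_right (hinv p.1 p.2)

theorem stmt15 [FiniteDimensional ℂ VV]
    (act : g →ₗ⁅ℂ⁆ Module.End ℂ VV) (Egl : Fin (M+1) → Fin (M+1) → g)
    -- the gl_N commutation relations
    (hgl : ∀ a b c d : Fin (M+1),
      ⁅Egl a b, Egl c d⁆ =
        (if b = c then (1 : ℂ) else 0) • Egl a d - (if d = a then (1 : ℂ) else 0) • Egl c b)
    -- i ∈ {1, …, N−1}, and a reduced presentation l of w_{[i]} : k ↦ k − i mod N
    (i : Fin (M+1)) (hi : (i : ℕ) ≠ 0)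
    (l : List (Fin M)) (hl : wordPerm l = Equiv.subRight i)
    (hred : ∀ l' : List (Fin M), wordPerm l' = Equiv.subRight i → l.length ≤ l'.length)
    -- λ, and a weight vector v of weight ν
    (lam nu : Fin (M+1) → ℝ) (v : VV)
    (hv : ∀ a : Fin (M+1), act (Egl a a) v = ((nu a : ℝ) : ℂ) • v)
    -- genericity of λ
    (hgen : ∀ a b : Fin (M+1), a ≠ b → ∀ j : ℕ,
      IsUnit ((tval lam nu a b) • (1 : Module.End ℂ VV) -
        act (Egl a a - Egl b b) - (j : ℂ) • 1)) :
    -- (1) 𝔹_{w_{[i]},V}(λ) is the product, in a suitable order, of all B^α_V(λ) with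
    -- α ∈ Σ₊, (ω_i^∨, α) > 0, i.e. α = (a,b) with a < i ≤ b
    (∃ L : List (Fin (M+1) × Fin (M+1)), L.Nodup ∧
      (∀ p : Fin (M+1) × Fin (M+1),
        p ∈ L ↔ (p.1 < p.2 ∧ (p.1 : ℕ) < (i : ℕ) ∧ (i : ℕ) ≤ (p.2 : ℕ))) ∧
      BBop act Egl lam nu l = ((L.map fun p => Bop act Egl lam nu p.1 p.2).prod)) ∧
    -- (2) the positive roots made negative by w_{[i]} are exactly those with
    -- (ω_i^∨, α) = 1
    (∀ a b : Fin (M+1), a < b →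
      (Equiv.subRight i b < Equiv.subRight i a ↔ ((a : ℕ) < (i : ℕ) ∧ (i : ℕ) ≤ (b : ℕ)))) :=
  stmt15_general act Egl i l hl hred lam nu
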